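/- Let R be a commutative ring of characteristic 2, let x, y ∈ R satisfy x^{q_0}(x^q + x) = y^q + y, and let b, c ∈ R satisfy b^q = b and c^q = c. Then the pair (x + b, y + b^{q_0}x + c) again satisfies the curve equation: (x+b)^{q_0}((x+b)^q + (x+b)) = (y + b^{q_0}x + c)^q + (y + b^{q_0}x + c). -/
import Mathlib

lemma frob2 {R : Type*} [CommRing R] (h2 : (2 : R) = 0) (a b : R) (n : ℕ) :
    (a + b) ^ (2 ^ n) = a ^ (2 ^ n) + b ^ (2 ^ n) := by
  induction n with
  | zero => simp
  | succ n ih =>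
      have : (2 : ℕ) ^ (n + 1) = 2 ^ n * 2 := by ring
      rw [this, pow_mul, pow_mul, pow_mul, ih]
      linear_combination (2 * (a ^ 2 ^ n * b ^ 2 ^ n) - (a ^ 2 ^ n * b ^ 2 ^ n) * 2) * h2
        + (a ^ 2 ^ n * b ^ 2 ^ n) * h2

/-- the maps `α_{b,c} : (x,y) ↦ (x+b, y+b^{q_0}x+c)`, for `b, c`
fixed by the `q`-power map, preserve the curve equation
`X^{q_0}(X^q+X) = Y^q+Y`. -/
theorem stmt_3 (R : Type*) [CommRing R] (h2 : (2 : R) = 0)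
    (s h q q0 : ℕ) (hh : 0 < h) (hs : 2 * h < s)
    (hq : q = 2 ^ s) (hq0 : q0 = 2 ^ h)
    (x y b c : R) (hcurve : x ^ q0 * (x ^ q + x) = y ^ q + y)
    (hb : b ^ q = b) (hc : c ^ q = c) :
    (x + b) ^ q0 * ((x + b) ^ q + (x + b))
      = (y + b ^ q0 * x + c) ^ q + (y + b ^ q0 * x + c) := by
  subst hq hq0
  have hbq : (b ^ 2 ^ h) ^ 2 ^ s = b ^ 2 ^ h := by
    rw [← pow_mul, mul_comm, pow_mul, hb]
  rw [frob2 h2, frob2 h2, frob2 h2, frob2 h2, mul_pow, hb, hbq, hc]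
  linear_combination hcurve + (x ^ 2 ^ h * b + b * b ^ 2 ^ h - c) * h2
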